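/- Let n ≥ 1. (i) For λ = (n), the unique admissible λ-configuration is ν = ((1^n), ∅). (ii) For λ = (1^n), the unique admissible λ-configuration is ν = ((1^n), (1^{n−1}), …, (1), ∅). -/

import Mathlib

/-- `μ` is a partition: all parts positive. -/
def IsPtn (μ : Multiset ℕ) : Prop := ∀ x ∈ μ, 0 < x

/-- The `j`-th part of the conjugate partition, `μ'_j`. -/
def conjPart (μ : Multiset ℕ) (j : ℕ) : ℕ := (μ.filter (fun x => j ≤ x)).card

/-- `Q_j(μ) = μ'_1 + ⋯ + μ'_j`. -/
def Qsum (μ : Multiset ℕ) (j : ℕ) : ℕ := ∑ x ∈ Finset.Icc 1 j, conjPart μ x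

/-- `P^i_j(ν) = Q_j(ν^{(i+1)}) − 2 Q_j(ν^{(i)}) + Q_j(ν^{(i−1)})`. -/
def PP (nu : List (Multiset ℕ)) (i j : ℕ) : ℤ :=
  (Qsum (nu.getD (i + 1) 0) j : ℤ) - 2 * (Qsum (nu.getD i 0) j : ℤ)
    + (Qsum (nu.getD (i - 1) 0) j : ℤ)

/-- Admissible `λ`-configuration. -/
def IsAdmissible (lam : Multiset ℕ) (nu : List (Multiset ℕ)) : Prop :=
  nu.length = lam.card + 1 ∧
  (∀ μ ∈ nu, IsPtn μ) ∧
  nu.getD 0 0 = Multiset.replicate lam.sum 1 ∧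
  (∀ i ≤ lam.card, (nu.getD i 0).sum + ((lam.sort (· ≥ ·)).take i).sum = lam.sum) ∧
  (∀ i, 1 ≤ i → i < lam.card → ∀ j, 1 ≤ j → j ≤ lam.sum → 0 ≤ PP nu i j)



lemma card_le_sum_of_ptn (μ : Multiset ℕ) (h : IsPtn μ) : μ.card ≤ μ.sum := by
  induction μ using Multiset.induction with
  | empty => simp
  | cons a s ih =>
    have ha := h a (Multiset.mem_cons_self a s)
    have := ih (fun x hx => h x (Multiset.mem_cons_of_mem hx))
    simp only [Multiset.card_cons, Multiset.sum_cons]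
    omega

lemma eq_replicate_of_card_ge (μ : Multiset ℕ) (h : IsPtn μ) (hc : μ.sum ≤ μ.card) :
    μ = Multiset.replicate μ.sum 1 := by
  have hall : ∀ x ∈ μ, x = 1 := by
    induction μ using Multiset.induction with
    | empty => simp
    | cons a s ih =>
      have ha := h a (Multiset.mem_cons_self a s)
      have hs : IsPtn s := fun x hx => h x (Multiset.mem_cons_of_mem hx)
      have h1 := card_le_sum_of_ptn s hs
      simp only [Multiset.card_cons, Multiset.sum_cons] at hc
      intro x hx
      rcases Multiset.mem_cons.mp hx with rfl | hx
      · omega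
      · exact ih hs (by omega) x hx
  have hcard : μ.card = μ.sum := le_antisymm (card_le_sum_of_ptn μ h) hc
  rw [← hcard]
  exact Multiset.eq_replicate_card.mpr hall

lemma eq_zero_of_sum_zero (μ : Multiset ℕ) (hs : μ.sum = 0) (h : IsPtn μ) : μ = 0 := by
  rw [Multiset.eq_zero_iff_forall_notMem]
  intro x hx
  have := h x hx
  have := Multiset.sum_eq_zero_iff.mp hs x hx
  omega

lemma conjPart_one_eq_card (μ : Multiset ℕ) (h : IsPtn μ) : conjPart μ 1 = μ.card := by
  unfold conjPart
  congr 1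
  rw [Multiset.filter_eq_self]
  exact fun x hx => h x hx

lemma Qsum_one (μ : Multiset ℕ) : Qsum μ 1 = conjPart μ 1 := by
  simp [Qsum]

lemma Qsum_replicate_one (m j : ℕ) : Qsum (Multiset.replicate m 1) j = if j = 0 then 0 else m := by
  have hconj : ∀ x, 1 ≤ x → conjPart (Multiset.replicate m 1) x = if x = 1 then m else 0 := by
    intro x hx
    unfold conjPart
    have : Multiset.filter (fun y => x ≤ y) (Multiset.replicate m 1)
        = if x ≤ 1 then Multiset.replicate m 1 else 0 := by
      split_ifs with h
      · rw [Multiset.filter_eq_self]; intro a ha; rw [Multiset.eq_of_mem_replicate ha]; exact h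
      · rw [Multiset.filter_eq_nil]; intro a ha; rw [Multiset.eq_of_mem_replicate ha]; omega
    rw [this]
    split_ifs with h1 h2 h3 <;> first | rfl | (simp_all; omega) | simp_all
  induction j with
  | zero => simp [Qsum]
  | succ k ih =>
    unfold Qsum at *
    rw [Finset.sum_Icc_succ_top (by omega)]
    rcases Nat.eq_zero_or_pos k with rfl | hk
    · simp [hconj 1 le_rfl]
    · rw [ih, hconj (k+1) (by omega), if_neg (by omega : ¬ k = 0),
        if_neg (by omega : ¬ k + 1 = 1), if_neg (by omega : ¬ k + 1 = 0)]
      omega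

lemma sum_eq_length_of_ones (l : List ℕ) (h : ∀ x ∈ l, x = 1) : l.sum = l.length := by
  induction l with
  | nil => simp
  | cons a t ih =>
    simp only [List.sum_cons, List.length_cons, h a List.mem_cons_self,
      ih (fun x hx => h x (List.mem_cons_of_mem a hx))]
    omega

lemma take_sort_replicate (n i : ℕ) (hi : i ≤ n) :
    (((Multiset.replicate n 1).sort (· ≥ ·)).take i).sum = i := by
  set l := (Multiset.replicate n 1).sort (· ≥ ·) with hl
  have hmem : ∀ x ∈ l, x = 1 := fun x hx =>
    Multiset.eq_of_mem_replicate ((Multiset.mem_sort _).mp hx)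
  have hlen : l.length = n := by rw [hl, Multiset.length_sort, Multiset.card_replicate]
  have hth : ∀ x ∈ l.take i, x = 1 := fun x hx => hmem x (List.mem_of_mem_take hx)
  rw [sum_eq_length_of_ones _ hth, List.length_take, hlen]
  omega

lemma getD_canonical (n k : ℕ) :
    (((List.range (n+1)).map (fun i => Multiset.replicate (n - i) 1)).getD k 0)
      = Multiset.replicate (n - k) 1 := by
  rcases lt_or_ge k (n+1) with hk | hk
  · rw [List.getD_eq_getElem _ _ (by simpa using hk)]
    simp
  · rw [List.getD_eq_default _ _ (by simpa using hk)]
    rw [Nat.sub_eq_zero_of_le (by omega)]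
    rfl

lemma sum_replicate_one (n : ℕ) : (Multiset.replicate n 1).sum = n := by
  simp [Multiset.sum_replicate]

theorem admissible_config_unique_row_and_column (n : ℕ) (hn : 1 ≤ n) :
    (∀ nu : List (Multiset ℕ),
      IsAdmissible ({n} : Multiset ℕ) nu ↔ nu = [Multiset.replicate n 1, (0 : Multiset ℕ)]) ∧
    (∀ nu : List (Multiset ℕ),
      IsAdmissible (Multiset.replicate n 1) nu ↔
        nu = (List.range (n + 1)).map (fun i => Multiset.replicate (n - i) 1)) := by
  have hcardS : (({n} : Multiset ℕ)).card = 1 := by simp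
  have hsumS : (({n} : Multiset ℕ)).sum = n := by simp
  constructor
  · -- part (i)
    intro nu
    constructor
    · rintro ⟨hlen, hptn, h0, hsum, -⟩
      rw [hcardS] at hlen
      have h1 := hsum 1 (by omega)
      rw [hsumS, hcardS] at *
      have hsort : (({n} : Multiset ℕ)).sort (· ≥ ·) = [n] := Multiset.sort_singleton n _
      rw [hsort] at h1
      simp only [List.take, List.sum_cons, List.sum_nil] at h1
      have hsum1 : (nu.getD 1 0).sum = 0 := by omega
      have hmem : nu.getD 1 0 ∈ nu := by
        rw [List.getD_eq_getElem _ _ (by omega)]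
        exact List.getElem_mem _
      have h1z : nu.getD 1 0 = 0 := eq_zero_of_sum_zero _ hsum1 (hptn _ hmem)
      apply List.ext_getElem (by simp [hlen])
      intro i hi hi2
      rw [hlen] at hi
      interval_cases i
      · rw [← List.getD_eq_getElem nu 0 (by omega), h0, hsumS]; rfl
      · rw [← List.getD_eq_getElem nu 0 (by omega), h1z]; rfl
    · rintro rfl
      refine ⟨by simp, ?_, by simp [hsumS], ?_, ?_⟩
      · intro μ hμ
        simp only [List.mem_cons, List.mem_singleton, List.not_mem_nil, or_false] at hμ
        rcases hμ with rfl | rfl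
        · intro x hx; rw [Multiset.eq_of_mem_replicate hx]; omega
        · intro x hx; simp at hx
      · intro i hi
        rw [hcardS] at hi
        rw [hsumS, Multiset.sort_singleton]
        interval_cases i
        · simp [sum_replicate_one]
        · simp
      · intro i h1 h2
        rw [hcardS] at h2
        omega
  · -- part (ii)
    have hcardR : (Multiset.replicate n 1).card = n := Multiset.card_replicate _ _
    have hsumR : (Multiset.replicate n 1).sum = n := sum_replicate_one n
    intro nu
    constructor
    · rintro ⟨hlen, hptn, h0, hsum, hPP⟩
      rw [hcardR] at hlen
      rw [hsumR] at h0
      -- element sums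
      have hs : ∀ i ≤ n, (nu.getD i 0).sum = n - i := by
        intro i hi
        have := hsum i (by omega)
        rw [hsumR, take_sort_replicate n i hi] at this
        omega
      have hp : ∀ i ≤ n, IsPtn (nu.getD i 0) := by
        intro i hi
        apply hptn
        rw [List.getD_eq_getElem _ _ (by omega)]
        exact List.getElem_mem _
      -- f i = card
      set f : ℕ → ℕ := fun i => (nu.getD i 0).card with hf
      have hfle : ∀ i ≤ n, f i ≤ n - i := by
        intro i hi
        have := card_le_sum_of_ptn _ (hp i hi)
        rw [hs i hi] at this
        exact this
      have hfn : f n = 0 := by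
        have hzz := eq_zero_of_sum_zero _ (by rw [hs n le_rfl]; omega) (hp n le_rfl)
        simp only [hf, hzz]
        rfl
      have hfn1 : f (n - 1) = 1 := by
        have hsm : (nu.getD (n-1) 0).sum = 1 := by rw [hs (n-1) (by omega)]; omega
        have hle := hfle (n-1) (by omega)
        have hpos : 0 < f (n-1) := by
          rw [hf]
          simp only [Multiset.card_pos]
          intro hz
          rw [hz] at hsm
          simp at hsm
        omega
      have hC : ∀ i, 1 ≤ i → i < n → (f (i+1) : ℤ) + (f (i-1) : ℤ) ≥ 2 * (f i : ℤ) := by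
        intro i h1 h2
        have := hPP i h1 (by omega) 1 le_rfl (by omega)
        unfold PP at this
        rw [Qsum_one, Qsum_one, Qsum_one,
          conjPart_one_eq_card _ (hp (i+1) (by omega)),
          conjPart_one_eq_card _ (hp i (by omega)),
          conjPart_one_eq_card _ (hp (i-1) (by omega))] at this
        simp only [hf]
        omega
      have hslope : ∀ d k, k + 1 + d = n → f (k+1) + 1 ≤ f k := by
        intro d
        induction d with
        | zero =>
          intro k hk
          have hk1 : k + 1 = n := by omega
          have hk2 : k = n - 1 := by omega
          rw [hk1, hfn, hk2, hfn1]
        | succ m ih =>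
          intro k hk
          have h1 := ih (k+1) (by omega)
          have h2 := hC (k+1) (by omega) (by omega)
          simp only [Nat.add_sub_cancel] at h2
          omega
      have hlow : ∀ d, d ≤ n → d ≤ f (n - d) := by
        intro d
        induction d with
        | zero => omega
        | succ m ih =>
          intro hd
          have h1 := ih (by omega)
          have h2 := hslope (m) (n - (m+1)) (by omega)
          rw [(by omega : n - (m+1) + 1 = n - m)] at h2
          omega
      have hfeq : ∀ k ≤ n, nu.getD k 0 = Multiset.replicate (n - k) 1 := by
        intro k hk
        have h1 := hlow (n - k) (by omega)
        rw [(by omega : n - (n - k) = k)] at h1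
        have h2 := hfle k hk
        have hcs : (nu.getD k 0).sum ≤ (nu.getD k 0).card := by
          rw [hs k hk]
          simp only [hf] at h1
          exact h1
        have := eq_replicate_of_card_ge _ (hp k hk) hcs
        rw [hs k hk] at this
        exact this
      apply List.ext_getElem (by simp [hlen])
      intro i hi hi2
      rw [hlen] at hi
      rw [← List.getD_eq_getElem nu 0 (by omega), hfeq i (by omega)]
      rw [← List.getD_eq_getElem _ 0 hi2, getD_canonical]
    · rintro rfl
      refine ⟨by simp [hcardR], ?_, ?_, ?_, ?_⟩
      · intro μ hμ
        simp only [List.mem_map, List.mem_range] at hμ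
        obtain ⟨i, -, rfl⟩ := hμ
        intro x hx
        rw [Multiset.eq_of_mem_replicate hx]
        omega
      · rw [getD_canonical, hsumR, Nat.sub_zero]
      · intro i hi
        rw [hcardR] at hi
        rw [getD_canonical, hsumR, take_sort_replicate n i hi, sum_replicate_one]
        omega
      · intro i h1 h2 j hj1 hj2
        rw [hcardR] at h2
        unfold PP
        rw [getD_canonical, getD_canonical, getD_canonical,
          Qsum_replicate_one, Qsum_replicate_one, Qsum_replicate_one,
          if_neg (by omega), if_neg (by omega), if_neg (by omega)]
        omega
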